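/- Let n ≥ 1, let 0 ≤ p ≤ 1 be real, and let G be the n×n real symmetric matrix with G_{ii} = 1/n and G_{ij} = p/n for i ≠ j (a positive semidefinite matrix). Then ∑_{i=1}^{n} ((√G)_{ii})² = (1/n)·( √(p + (1−p)/n) + (n−1)·√((1−p)/n) )². -/

import Mathlib

open Matrix

open scoped ComplexOrder in
/-- The square root of a positive semidefinite matrix (the definition removed from Mathlib,
restated with its old meaning). -/
noncomputable def Matrix.PosSemidef.sqrt {n 𝕜 : Type*} [Fintype n] [DecidableEq n] [RCLike 𝕜]
    {A : Matrix n n 𝕜} (hA : A.PosSemidef) : Matrix n n 𝕜 :=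
  hA.1.eigenvectorUnitary.1 * diagonal ((↑) ∘ (√·) ∘ hA.1.eigenvalues) *
    (star hA.1.eigenvectorUnitary : Matrix n n 𝕜)

/-!
With `J` the all-ones matrix, `G = a • 1 + b • J` where `a = (1 - p) / n` and `b = p / n`.
Since `J * J = n • J`, the matrices `α • 1 + β • J` form a commutative algebra, and
`α • 1 + β • J` squares to `G` as soon as `α ^ 2 = a` and `2 α β + n β ^ 2 = b`; the choice
`α = √a`, `β = (√(a + n b) - √a) / n ≥ 0` gives a positive semidefinite solution, which by
uniqueness of positive semidefinite square roots is `√G`. Its diagonal entries all equal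
`α + β = (√(p + a) + (n - 1) √a) / n`.
-/

namespace Matrix

section AllOnes

variable {ι R : Type*} [Fintype ι]

def allOnes (m n R : Type*) [One R] : Matrix m n R := of fun _ _ => 1

@[simp]
theorem allOnes_apply {m n : Type*} [One R] (i : m) (j : n) : allOnes m n R i j = 1 := rfl

theorem allOnes_mul_allOnes [NonAssocSemiring R] :
    allOnes ι ι R * allOnes ι ι R = Fintype.card ι • allOnes ι ι R := by
  ext i j
  simp [mul_apply]

theorem smul_one_add_smul_allOnes_mul_self {S : Type*} [CommSemiring S] [Semiring R]
    [Algebra S R] [DecidableEq ι] (a b : S) :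
    (a • 1 + b • allOnes ι ι R) * (a • 1 + b • allOnes ι ι R) =
      (a * a) • 1 + (2 * a * b + Fintype.card ι * b * b) • allOnes ι ι R := by
  simp only [add_mul, mul_add, smul_mul_smul, one_mul, mul_one, allOnes_mul_allOnes]
  module

open scoped ComplexOrder in
theorem posSemidef_allOnes {𝕜 : Type*} [RCLike 𝕜] : (allOnes ι ι 𝕜).PosSemidef := by
  simpa [vecMulVec, allOnes] using posSemidef_vecMulVec_self_star (1 : ι → 𝕜)

end AllOnes

section Sqrt

open scoped ComplexOrder MatrixOrder

variable {ι 𝕜 : Type*} [Fintype ι] [DecidableEq ι] [RCLike 𝕜]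

theorem PosSemidef.sqrt_eq_cfcSqrt {A : Matrix ι ι 𝕜} (hA : A.PosSemidef) :
    hA.sqrt = CFC.sqrt A := by
  rw [CFC.sqrt_eq_cfc, cfc_nnreal_eq_real _ A, hA.1.cfc_eq]
  have h : (fun x => √(max x 0)) ∘ hA.1.eigenvalues = Real.sqrt ∘ hA.1.eigenvalues :=
    funext fun i => by simp [hA.eigenvalues_nonneg i]
  simp only [IsHermitian.cfc, Real.coe_sqrt, Real.coe_toNNReal', h,
    Unitary.conjStarAlgAut_apply]
  rfl

theorem PosSemidef.sqrt_eq_of_mul_self_eq {A S : Matrix ι ι 𝕜} (hA : A.PosSemidef)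
    (hS : S.PosSemidef) (h : S * S = A) : hA.sqrt = S := by
  rw [hA.sqrt_eq_cfcSqrt, CFC.sqrt_unique h hS.nonneg]

theorem PosSemidef.sqrt_smul_one_add_smul_allOnes [Nonempty ι] {a b : ℝ} (ha : 0 ≤ a)
    (hb : 0 ≤ b) (hA : (a • 1 + b • allOnes ι ι 𝕜).PosSemidef) :
    hA.sqrt = √a • 1 +
      ((√(a + Fintype.card ι * b) - √a) / Fintype.card ι) • allOnes ι ι 𝕜 := by
  set m : ℝ := (Fintype.card ι : ℝ)
  set β := (√(a + m * b) - √a) / m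
  have hm : 0 < m := by simp [m, Fintype.card_pos]
  have hβ : 0 ≤ β :=
    div_nonneg (sub_nonneg.2 (Real.sqrt_le_sqrt (by simpa using by positivity))) hm.le
  -- `m β = √(a + m b) - √a`, so `2 √a β + m β β = (√(a + m b) ^ 2 - √a ^ 2) / m`
  have hβ_eq : 2 * √a * β + m * β * β = b := by
    have hc := Real.sq_sqrt (show 0 ≤ a + m * b by positivity)
    have hs := Real.sq_sqrt ha
    simp only [β]
    field_simp
    linear_combination hc - hs
  refine hA.sqrt_eq_of_mul_self_eq ((PosSemidef.one.smul (Real.sqrt_nonneg a)).add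
    (posSemidef_allOnes.smul hβ)) ?_
  rw [smul_one_add_smul_allOnes_mul_self, Real.mul_self_sqrt ha, hβ_eq]

end Sqrt

end Matrix

theorem stmt_12 (n : ℕ) (hn : 1 ≤ n) (p : ℝ) (hp0 : 0 ≤ p) (hp1 : p ≤ 1)
    (G : Matrix (Fin n) (Fin n) ℝ)
    (hGdef : ∀ i j, G i j = if i = j then (1 : ℝ) / n else p / n)
    (hG : G.PosSemidef) :
    ∑ i, (hG.sqrt i i) ^ 2 =
      (1 / n) * (Real.sqrt (p + (1 - p) / n) +
        ((n : ℝ) - 1) * Real.sqrt ((1 - p) / n)) ^ 2 := by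
  have : Nonempty (Fin n) := ⟨⟨0, hn⟩⟩
  have hn0 : (n : ℝ) ≠ 0 := by positivity
  set a := (1 - p) / n
  have hG_eq : G = a • 1 + (p / n) • allOnes (Fin n) (Fin n) ℝ := by
    ext i j
    rw [hGdef]
    split_ifs with h <;> simp [h, a]
    ring
  subst hG_eq
  rw [hG.sqrt_smul_one_add_smul_allOnes (div_nonneg (by linarith) (by positivity))
    (div_nonneg hp0 (by positivity))]
  simp only [Matrix.add_apply, Matrix.smul_apply, one_apply_eq, allOnes_apply, smul_eq_mul,
    mul_one, Finset.sum_const, Finset.card_univ, Fintype.card_fin, nsmul_eq_mul]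
  rw [mul_div_cancel₀ p hn0, add_comm a]
  field_simp
  ring
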